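/- Let G' = Π_V(G) be the projection of a GMWf G satisfying the axioms' visibility and non-recursivity assumptions, let t_V be an artifact that is a prefix of at least one local target artifact of G', and let t_V^maj be obtained from t_V by developing some of its unlocked buds in accordance with the productions of G'. Then t_V ≤ t_V^maj, and t_V^maj is a prefix of at least one local target artifact of G' (i.e. the set of local target artifacts admitting t_V^maj as a prefix is a nonempty subset of those admitting t_V as a prefix). -/

import Mathlib

/-!
Formalization of LSAWfP concepts: GMWf, artifacts, views, projections.
-/

open scoped Classical

namespace LSAWfP

/-- Scheduling annotations: sequential (`⨟`) or parallel (`∥`). -/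
inductive Ann : Type
  | seq : Ann
  | par : Ann
deriving DecidableEq

/-- Grammatical symbols: base symbols (sorts of the process) together with
(re)structuring symbols, canonically named by the local scheduling
(annotation and list of son symbols) they induce. -/
inductive Sym (α : Type) : Type
  | base : α → Sym α
  | struct : Ann → List (Sym α) → Sym α

/-- A (re)structuring symbol. -/
def Sym.isStruct {α : Type} : Sym α → Prop
  | .base _ => False
  | .struct _ _ => True

/-- A production `X₀ → X₁ ⨟ … ⨟ Xₙ` (if `ann = .seq`) or
`X₀ → X₁ ∥ … ∥ Xₙ` (if `ann = .par`); `rhs = []` encodes `X₀ → ε`. -/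
structure Production (α : Type) : Type where
  lhs : Sym α
  ann : Ann
  rhs : List (Sym α)

/-- An artifact: a finite ordered tree whose nodes are labelled by grammatical
symbols, each hierarchical decomposition being annotated sequential or
parallel; `bud s u` is a bud leaf of type `s`, unlocked iff `u = true`. -/
inductive Tree (α : Type) : Type
  | node : Sym α → Ann → List (Tree α) → Tree α
  | bud : Sym α → Bool → Tree α

namespace Tree

/-- The symbol labelling the root of an artifact. -/
def rootSym {α : Type} : Tree α → Sym α
  | .node s _ _ => s
  | .bud s _ => s

/-- The annotation of the root decomposition of an artifact. -/
def rootAnn {α : Type} : Tree α → Ann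
  | .node _ a _ => a
  | .bud _ _ => .seq

end Tree

/-- A grammatical model of workflow (GMWf): symbols, productions, axioms. -/
structure PreGMWf (α : Type) : Type where
  symbols : Set (Sym α)
  prods : Set (Production α)
  axioms : Set (Sym α)

/-- `G` is a genuine GMWf: finite sets of symbols and productions, axioms among
the symbols, and productions built on the symbols. -/
def IsGMWf {α : Type} (G : PreGMWf α) : Prop :=
  G.symbols.Finite ∧ G.prods.Finite ∧ G.axioms ⊆ G.symbols ∧
    ∀ p ∈ G.prods, p.lhs ∈ G.symbols ∧ ∀ x ∈ p.rhs, x ∈ G.symbols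

/-- Local conformance of an artifact (possibly containing buds) to a GMWf:
every hierarchical decomposition is obtained from a production of matching
form, and buds are typed by symbols of the model. -/
inductive LocalOK {α : Type} (G : PreGMWf α) : Tree α → Prop
  | bud {s : Sym α} {u : Bool} : s ∈ G.symbols → LocalOK G (.bud s u)
  | node {s : Sym α} {a : Ann} {ts : List (Tree α)} :
      (⟨s, a, ts.map Tree.rootSym⟩ : Production α) ∈ G.prods →
      (∀ t ∈ ts, LocalOK G t) → LocalOK G (.node s a ts)

/-- An artifact `t` conforms to `G` (written `t ∴ G`): its root is labelled by
an axiom and every hierarchical decomposition comes from a production. -/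
def Conforms {α : Type} (G : PreGMWf α) (t : Tree α) : Prop :=
  t.rootSym ∈ G.axioms ∧ LocalOK G t

/-- Bud-free artifacts generated by the productions of `G`. -/
inductive Gen {α : Type} (G : PreGMWf α) : Tree α → Prop
  | node {s : Sym α} {a : Ann} {ts : List (Tree α)} :
      (⟨s, a, ts.map Tree.rootSym⟩ : Production α) ∈ G.prods →
      (∀ t ∈ ts, Gen G t) → Gen G (.node s a ts)

/-- A bud-free artifact. -/
inductive BudFree {α : Type} : Tree α → Prop
  | node {s : Sym α} {a : Ann} {ts : List (Tree α)} :
      (∀ t ∈ ts, BudFree t) → BudFree (.node s a ts)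

/-- `arts G`: the set of target artifacts of `G`, i.e. the bud-free artifacts
generated from an axiom of `G` by its productions. -/
def arts {α : Type} (G : PreGMWf α) : Set (Tree α) :=
  {t | t.rootSym ∈ G.axioms ∧ Gen G t}

/-- One derivation step between symbols: `s'` occurs in the right-hand side of
a production of lhs `s`. -/
def StepSym {α : Type} (G : PreGMWf α) (s s' : Sym α) : Prop :=
  ∃ p ∈ G.prods, p.lhs = s ∧ s' ∈ p.rhs

/-- `G` is non-recursive: no symbol can derive a tree in which it reappears. -/
def NonRecursive {α : Type} (G : PreGMWf α) : Prop :=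
  ∀ s : Sym α, ¬ Relation.TransGen (StepSym G) s s

/-- The artifact projection `π_V(t)` of an artifact according to a view `V`:
visible nodes are kept, invisible nodes are deleted with their projected
sub-artifacts promoted, and fresh (re)structuring symbols are inserted
whenever the projected sons of a node mix scheduling types incompatible with
a single production form; in general it returns a forest. -/
noncomputable def proj {α : Type} (V : Set (Sym α)) : Tree α → List (Tree α)
  | .bud s u => if s ∈ V then [.bud s u] else []
  | .node s a ts =>
      let pieces : List (List (Tree α) ⊕ Tree α) :=
        ts.attach.map (fun x =>
          let ps := proj V x.1
          if x.1.rootAnn = a ∨ ps.length ≤ 1 then .inl ps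
          else .inr (.node (.struct x.1.rootAnn (ps.map Tree.rootSym)) x.1.rootAnn ps))
      let flat : List (Tree α) := pieces.flatMap (fun p => p.elim id (fun w => [w]))
      if s ∈ V then
        match flat, pieces.any Sum.isRight with
        | [Tree.node _ a1 cs], true => [Tree.node s a1 cs]
        | _, _ => [Tree.node s a flat]
      else flat
termination_by t => sizeOf t
decreasing_by
  all_goals (simp_wf; have := List.sizeOf_lt_of_mem x.2; omega)

/-- All productions used in the hierarchical decompositions of an artifact. -/
def treeProds {α : Type} : Tree α → List (Production α)
  | .bud _ _ => []
  | .node s a ts =>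
      ⟨s, a, ts.map Tree.rootSym⟩ :: ts.attach.flatMap (fun x => treeProds x.1)
termination_by t => sizeOf t
decreasing_by
  all_goals (simp_wf; have := List.sizeOf_lt_of_mem x.2; omega)

/-- All symbols occurring in an artifact. -/
def treeSyms {α : Type} : Tree α → List (Sym α)
  | .bud s _ => [s]
  | .node s _ ts => s :: ts.attach.flatMap (fun x => treeSyms x.1)
termination_by t => sizeOf t
decreasing_by
  all_goals (simp_wf; have := List.sizeOf_lt_of_mem x.2; omega)

/-- The local target artifacts for the view `V`: projections of the target
artifacts of `G`. -/
noncomputable def localArts {α : Type} (V : Set (Sym α)) (G : PreGMWf α) : Set (Tree α) :=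
  {t' | ∃ t ∈ arts G, t' ∈ proj V t}

/-- The retained (re)structuring symbols of the projection of `G` along `V`. -/
noncomputable def structSymsOf {α : Type} (V : Set (Sym α)) (G : PreGMWf α) : Set (Sym α) :=
  {s | (∃ t' ∈ localArts V G, s ∈ treeSyms t') ∧ s.isStruct}

/-- The GMWf projection `Π_V(G)`: its symbols are `V` together with the
retained restructuring symbols, its productions are those occurring in the
local target artifacts, and its axioms are the axioms of `G`. -/
noncomputable def projG {α : Type} (V : Set (Sym α)) (G : PreGMWf α) : PreGMWf α where
  symbols := V ∪ structSymsOf V G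
  prods := {p | ∃ t' ∈ localArts V G, p ∈ treeProds t'}
  axioms := G.axioms

/-- The prefix relation on artifacts: `t_a ≤ t_b` iff their roots carry the
same symbol and either the root of `t_a` is a bud, or the decompositions have
the same annotation and the sons are pairwise prefixes. -/
inductive TPrefix {α : Type} : Tree α → Tree α → Prop
  | bud {s : Sym α} {u : Bool} {t : Tree α} : t.rootSym = s → TPrefix (.bud s u) t
  | node {s : Sym α} {a : Ann} {ts ts' : List (Tree α)} :
      List.Forall₂ TPrefix ts ts' → TPrefix (.node s a ts) (.node s a ts')

/-- `Develop G t t'`: `t'` is obtained from `t` by developing some of its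
unlocked buds in accordance with the productions of `G` (each developed bud of
type `X` is replaced by a tree rooted at `X` built from the productions of
`G`, whose leaves may again be buds). -/
inductive Develop {α : Type} (G : PreGMWf α) : Tree α → Tree α → Prop
  | bud_keep {s : Sym α} {u : Bool} : Develop G (.bud s u) (.bud s u)
  | bud_dev {s : Sym α} {t : Tree α} :
      t.rootSym = s → LocalOK G t → Develop G (.bud s true) t
  | node {s : Sym α} {a : Ann} {ts ts' : List (Tree α)} :
      List.Forall₂ (Develop G) ts ts' → Develop G (.node s a ts) (.node s a ts')

/-- The accreditation of an actor: its sets of symbols readable (its view),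
writable and executable. -/
structure Accreditation (α : Type) : Type where
  read : Set (Sym α)
  write : Set (Sym α)
  exec : Set (Sym α)

/-- A grammatical model of administrative workflow process: a GMWf together
with the list of accreditations of its actors. -/
structure GMAWfP (α : Type) : Type where
  gmwf : PreGMWf α
  actors : List (Accreditation α)

/-- The axioms' visibility assumption: every axiom of the GMWf belongs to
every actor's view. -/
def AxiomsVisible {α : Type} (W : GMAWfP α) : Prop :=
  ∀ acc ∈ W.actors, W.gmwf.axioms ⊆ acc.read

/-- Well-formedness of the accreditations: each view is a set of symbols of
the model and each actor accredited in writing on a sort is accredited in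
reading on it. -/
def ActorsWf {α : Type} (W : GMAWfP α) : Prop :=
  ∀ acc ∈ W.actors, acc.read ⊆ W.gmwf.symbols ∧ acc.write ⊆ acc.read

end LSAWfP

/-! In `Π_V(G)` every production occurs in a local target artifact, which is bud-free and built
from productions of `Π_V(G)`; hence every symbol on a right-hand side of `Π_V(G)` roots a bud-free
artifact generated by `Π_V(G)`. In a model where all right-hand sides are productive, a locally
conforming artifact with a productive root extends to a generated one, so developing buds of a
prefix of a generated artifact yields again a prefix of a generated artifact, with the same root.
The inclusion is transitivity of `≤`, developing being an extension. -/

namespace List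

variable {α β γ : Type*} {R : α → β → Prop}

theorem Forall₂.comp {S : β → γ → Prop} {T : α → γ → Prop}
    (H : ∀ a b c, R a b → S b c → T a c) :
    ∀ {l₁ l₂ l₃}, Forall₂ R l₁ l₂ → Forall₂ S l₂ l₃ → Forall₂ T l₁ l₃
  | _, _, _, .nil, .nil => .nil
  | _, _, _, .cons h₁ t₁, .cons h₂ t₂ => .cons (H _ _ _ h₁ h₂) (t₁.comp H t₂)

theorem Forall₂.map_eq_map {f : α → γ} {g : β → γ} (H : ∀ a b, R a b → f a = g b)
    {l₁ l₂} (h : Forall₂ R l₁ l₂) : l₁.map f = l₂.map g := by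
  rw [← forall₂_eq_eq_eq, forall₂_map_left_iff, forall₂_map_right_iff]
  exact h.imp H

theorem Forall₂.exists_mem_left : ∀ {l₁ l₂}, Forall₂ R l₁ l₂ → ∀ a ∈ l₁, ∃ b ∈ l₂, R a b
  | _, _, .cons h t, a, ha => by
    rcases mem_cons.1 ha with rfl | ha
    · exact ⟨_, mem_cons_self, h⟩
    · obtain ⟨b, hb, hab⟩ := t.exists_mem_left a ha
      exact ⟨b, mem_cons_of_mem _ hb, hab⟩

theorem Forall₂.exists_mem_right {l₁ l₂} (h : Forall₂ R l₁ l₂) : ∀ b ∈ l₂, ∃ a ∈ l₁, R a b :=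
  (Forall₂.flip (R := fun b a => R a b) h).exists_mem_left

theorem exists_forall₂_of_forall_exists :
    ∀ {l : List α}, (∀ a ∈ l, ∃ b, R a b) → ∃ l', Forall₂ R l l'
  | [], _ => ⟨[], .nil⟩
  | a :: l, h => by
    obtain ⟨b, hb⟩ := h a mem_cons_self
    obtain ⟨l', hl'⟩ := exists_forall₂_of_forall_exists fun x hx => h x (mem_cons_of_mem _ hx)
    exact ⟨b :: l', .cons hb hl'⟩

end List

namespace LSAWfP

variable {α : Type}

theorem Tree.induction_mem {motive : Tree α → Prop} (bud : ∀ s u, motive (.bud s u))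
    (node : ∀ s a ts, (∀ t ∈ ts, motive t) → motive (.node s a ts)) : ∀ t, motive t
  | .bud s u => bud s u
  | .node s a ts => node s a ts fun t _ => Tree.induction_mem bud node t
termination_by t => sizeOf t
decreasing_by simp only [Tree.node.sizeOf_spec]; have := List.sizeOf_lt_of_mem ‹t ∈ ts›; omega

theorem TPrefix.rootSym_eq {t t' : Tree α} (h : TPrefix t t') : t.rootSym = t'.rootSym := by
  cases h with
  | bud h => exact h.symm
  | node _ => rfl

theorem TPrefix.trans {t₁ t₂ t₃ : Tree α} (h₁₂ : TPrefix t₁ t₂) (h₂₃ : TPrefix t₂ t₃) :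
    TPrefix t₁ t₃ := by
  induction t₁ using Tree.induction_mem generalizing t₂ t₃ with
  | bud s u => cases h₁₂ with | bud h => exact .bud (h₂₃.rootSym_eq ▸ h)
  | node s a ts ih =>
    cases h₁₂ with | node hs₁₂ =>
    cases h₂₃ with | node hs₂₃ =>
    exact .node (((List.forall₂_and_left _ _).2 ⟨ih, hs₁₂⟩).comp
      (fun _ _ _ h₁ h₂ => h₁.1 h₁.2 h₂) hs₂₃)

theorem Develop.tprefix {G : PreGMWf α} {t t' : Tree α} (h : Develop G t t') : TPrefix t t' := by
  induction t using Tree.induction_mem generalizing t' with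
  | bud s u =>
    cases h with
    | bud_keep => exact .bud rfl
    | bud_dev h _ => exact .bud h
  | node s a ts ih =>
    cases h with | node hs =>
    exact .node (((List.forall₂_and_left _ _).2 ⟨ih, hs⟩).imp fun _ _ h => h.1 h.2)

def Productive (G : PreGMWf α) (s : Sym α) : Prop :=
  ∃ t, Gen G t ∧ t.rootSym = s

def ProductiveRhs (G : PreGMWf α) : Prop :=
  ∀ p ∈ G.prods, ∀ s ∈ p.rhs, Productive G s

def Completable (G : PreGMWf α) (t : Tree α) : Prop :=
  ∃ t', Gen G t' ∧ TPrefix t t'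

section Completable

variable {G : PreGMWf α}

theorem Completable.productive_rootSym {t : Tree α} (h : Completable G t) :
    Productive G t.rootSym :=
  let ⟨t', hgen, hpre⟩ := h
  ⟨t', hgen, hpre.rootSym_eq.symm⟩

theorem Completable.node {s : Sym α} {a : Ann} {ts : List (Tree α)}
    (hp : (⟨s, a, ts.map Tree.rootSym⟩ : Production α) ∈ G.prods)
    (hts : ∀ t ∈ ts, Completable G t) : Completable G (.node s a ts) := by
  obtain ⟨ts', hts'⟩ := List.exists_forall₂_of_forall_exists hts
  have hroots : ts.map Tree.rootSym = ts'.map Tree.rootSym :=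
    hts'.map_eq_map fun _ _ h => h.2.rootSym_eq
  refine ⟨.node s a ts', .node (hroots ▸ hp) fun t' ht' => ?_, .node (hts'.imp fun _ _ h => h.2)⟩
  obtain ⟨t, -, hgen, -⟩ := hts'.exists_mem_right t' ht'
  exact hgen

theorem LocalOK.completable (hG : ProductiveRhs G) {t : Tree α} (hok : LocalOK G t)
    (hroot : Productive G t.rootSym) : Completable G t := by
  induction t using Tree.induction_mem with
  | bud s u =>
    obtain ⟨t', hgen, hroot'⟩ := hroot
    exact ⟨t', hgen, .bud hroot'⟩
  | node s a ts ih =>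
    cases hok with | node hp hts =>
    exact .node hp fun t ht =>
      ih t ht (hts t ht) (hG _ hp _ (List.mem_map_of_mem (f := Tree.rootSym) ht))

theorem Completable.develop (hG : ProductiveRhs G) {t t' : Tree α} (ht : Completable G t)
    (hd : Develop G t t') : Completable G t' := by
  induction t using Tree.induction_mem generalizing t' with
  | bud s u =>
    cases hd with
    | bud_keep => exact ht
    | bud_dev hroot hok => exact hok.completable hG (hroot ▸ ht.productive_rootSym)
  | node s a ts ih =>
    cases hd with | @node _ _ _ ts' hds =>
    obtain ⟨_, hgen, hpre⟩ := ht
    cases hpre with | @node _ _ _ us hpres =>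
    cases hgen with | node hp hus =>
    have hroots : ts'.map Tree.rootSym = us.map Tree.rootSym :=
      (hds.map_eq_map fun _ _ h => h.tprefix.rootSym_eq).symm.trans
        (hpres.map_eq_map fun _ _ h => h.rootSym_eq)
    refine .node (hroots ▸ hp) fun x' hx' => ?_
    obtain ⟨x, hx, hdx⟩ := hds.exists_mem_right x' hx'
    obtain ⟨u, hu, hxu⟩ := hpres.exists_mem_left x hx
    exact ih x hx ⟨u, hus u hu, hxu⟩ hdx

end Completable

theorem Gen.budFree {G : PreGMWf α} {t : Tree α} (h : Gen G t) : BudFree t := by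
  induction t using Tree.induction_mem with
  | bud s u => cases h
  | node s a ts ih => cases h with | node _ hts => exact .node fun t ht => ih t ht (hts t ht)

theorem gen_of_budFree {G : PreGMWf α} {t : Tree α} (hb : BudFree t)
    (hp : ∀ p ∈ treeProds t, p ∈ G.prods) : Gen G t := by
  induction t using Tree.induction_mem with
  | bud s u => cases hb
  | node s a ts ih =>
    cases hb with | node hbs =>
    rw [treeProds] at hp
    simp only [List.mem_cons, List.mem_flatMap, List.mem_attach, true_and, Subtype.exists,
      forall_eq_or_imp, forall_exists_index] at hp
    exact .node hp.1 fun t ht => ih t ht (hbs t ht) fun p hpt => hp.2 p t ht hpt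

theorem Gen.productive_of_mem_treeProds {G : PreGMWf α} {t : Tree α} (h : Gen G t)
    {p : Production α} (hp : p ∈ treeProds t) : ∀ s ∈ p.rhs, Productive G s := by
  induction t using Tree.induction_mem with
  | bud s u => cases h
  | node s a ts ih =>
    cases h with | node _ hts =>
    rw [treeProds] at hp
    simp only [List.mem_cons, List.mem_flatMap, List.mem_attach, true_and, Subtype.exists] at hp
    rcases hp with rfl | ⟨t, ht, hpt⟩
    · simp only [List.mem_map, forall_exists_index, and_imp]
      rintro _ t ht rfl
      exact ⟨t, hts t ht, rfl⟩
    · exact ih t ht (hts t ht) hpt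

theorem budFree_of_mem_proj (V : Set (Sym α)) {t : Tree α} (ht : BudFree t) :
    ∀ t' ∈ proj V t, BudFree t' := by
  induction t using Tree.induction_mem with
  | bud s u => cases ht
  | node s a ts ih =>
    cases ht with | node hts =>
    rw [proj]
    generalize hpieces : List.map _ ts.attach = pieces
    have hflat : ∀ w ∈ pieces.flatMap (fun p => Sum.elim id (fun w => [w]) p), BudFree w := by
      subst hpieces
      simp only [List.mem_flatMap, List.mem_map, List.mem_attach, true_and, Subtype.exists]
      rintro w ⟨_, ⟨x, hx, rfl⟩, hw⟩
      split_ifs at hw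
      · exact ih x hx (hts x hx) w hw
      · rcases List.mem_singleton.1 hw with rfl
        exact .node (ih x hx (hts x hx))
    split_ifs
    · split
      · rename_i heq _
        cases hflat _ (heq ▸ List.mem_singleton_self _) with
        | node h => simpa using BudFree.node h
      · simpa using BudFree.node hflat
    · exact hflat

theorem productiveRhs_projG (V : Set (Sym α)) (G : PreGMWf α) : ProductiveRhs (projG V G) := by
  rintro p ⟨t', ht', hpt'⟩
  obtain ⟨t, ht, ht'proj⟩ := ht'
  have hgen : Gen (projG V G) t' :=
    gen_of_budFree (budFree_of_mem_proj V ht.2.budFree t' ht'proj) fun q hq =>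
      ⟨t', ⟨t, ht, ht'proj⟩, hq⟩
  exact hgen.productive_of_mem_treeProds hpt'

theorem developed_replica_still_prefix_general {α : Type} (G : PreGMWf α)
    (V : Set (Sym α))
    (tV : Tree α) (htV : ∃ ta ∈ arts (projG V G), TPrefix tV ta)
    (tVmaj : Tree α) (hdev : Develop (projG V G) tV tVmaj) :
    TPrefix tV tVmaj ∧
    {ta ∈ arts (projG V G) | TPrefix tVmaj ta}.Nonempty ∧
    {ta ∈ arts (projG V G) | TPrefix tVmaj ta} ⊆
      {ta ∈ arts (projG V G) | TPrefix tV ta} := by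
  obtain ⟨ta, ⟨hax, hgen⟩, hpre⟩ := htV
  obtain ⟨tb, hgen', hpre'⟩ :=
    Completable.develop (productiveRhs_projG V G) ⟨ta, hgen, hpre⟩ hdev
  have hroot : tb.rootSym = ta.rootSym :=
    hpre'.rootSym_eq.symm.trans (hdev.tprefix.rootSym_eq.symm.trans hpre.rootSym_eq)
  exact ⟨hdev.tprefix, ⟨tb, ⟨hroot ▸ hax, hgen'⟩, hpre'⟩,
    fun t ht => ⟨ht.1, hdev.tprefix.trans ht.2⟩⟩

/-- Let `G' = Π_V(G)` for a GMWf `G` satisfying the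
axioms' visibility (every axiom belongs to `V`) and non-recursivity
assumptions, let `tV` be a prefix of at least one local target artifact of
`G'`, and let `tVmaj` be obtained from `tV` by developing some of its
unlocked buds in accordance with the productions of `G'`.  Then
`tV ≤ tVmaj`, and the set of local target artifacts of `G'` admitting
`tVmaj` as a prefix is a nonempty subset of those admitting `tV` as a
prefix. -/
theorem developed_replica_still_prefix {α : Type} (G : PreGMWf α)
    (V : Set (Sym α)) (hG : IsGMWf G) (hV : V ⊆ G.symbols)
    (hVis : G.axioms ⊆ V) (hNR : NonRecursive G)
    (tV : Tree α) (htV : ∃ ta ∈ arts (projG V G), TPrefix tV ta)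
    (tVmaj : Tree α) (hdev : Develop (projG V G) tV tVmaj) :
    TPrefix tV tVmaj ∧
    {ta ∈ arts (projG V G) | TPrefix tVmaj ta}.Nonempty ∧
    {ta ∈ arts (projG V G) | TPrefix tVmaj ta} ⊆
      {ta ∈ arts (projG V G) | TPrefix tV ta} :=
  developed_replica_still_prefix_general G V tV htV tVmaj hdev

end LSAWfP
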